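/- arXiv:2001.11524 — 4 statements merged into one kernel-verified Lean document; each statement's English description precedes it below -/
import Mathlib

section
/- Let G be a square-free simple graph with minimum degree ≥ 3, let a, b be vertices with b ∉ {a} ∪ N(a), and suppose N(a) ∩ N(b) = ∅. Set k = |N(a)|, ℓ = |N(b)|, and assume k ≥ ℓ ≥ 3. For N' ⊆ N(a), define cmp(N') = {b' ∈ N(b) : ∃ a' ∈ N', b' ∉ {a'} ∪ N(a')}. Then for every N' ⊆ N(a), k·|cmp(N')| ≥ ℓ·|N'|. -/
open Finset

/-- A simple graph is square-free if it contains no 4-cycle. -/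
def IsSquareFree {V : Type*} (G : SimpleGraph V) : Prop :=
  ∀ v₁ v₂ v₃ v₄ : V, v₁ ≠ v₂ → v₂ ≠ v₃ → v₃ ≠ v₄ → v₄ ≠ v₁ → v₁ ≠ v₃ → v₂ ≠ v₄ →
    ¬(G.Adj v₁ v₂ ∧ G.Adj v₂ v₃ ∧ G.Adj v₃ v₄ ∧ G.Adj v₄ v₁)

theorem stmt11 {V : Type*} [Fintype V] [DecidableEq V] (G : SimpleGraph V)
    [DecidableRel G.Adj] (hsf : IsSquareFree G) (hmin : ∀ v : V, 3 ≤ G.degree v)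
    (a b : V) (hb : b ∉ insert a (G.neighborFinset a))
    (hdisj : G.neighborFinset a ∩ G.neighborFinset b = ∅)
    (k ℓ : ℕ) (hk : k = G.degree a) (hl : ℓ = G.degree b)
    (hkl : ℓ ≤ k) (hl3 : 3 ≤ ℓ)
    (N' : Finset V) (hN' : N' ⊆ G.neighborFinset a) :
    ℓ * N'.card ≤
      k * ((G.neighborFinset b).filter
        (fun b' => ∃ a' ∈ N', b' ∉ insert a' (G.neighborFinset a'))).card := by
  classical
  simp only [mem_insert, SimpleGraph.mem_neighborFinset, not_or] at hb
  obtain ⟨hba, hbadj⟩ := hb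
  have hdisj' : ∀ x, x ∈ G.neighborFinset a → x ∉ G.neighborFinset b := by
    intro x hx hxb
    have : x ∈ G.neighborFinset a ∩ G.neighborFinset b := mem_inter.mpr ⟨hx, hxb⟩
    simp [hdisj] at this
  rcases Nat.lt_or_ge N'.card 2 with h2 | h2
  · have h01 : N'.card = 0 ∨ N'.card = 1 := by omega
    rcases h01 with h0 | h1
    · simp [h0]
    · obtain ⟨a', ha'⟩ := card_eq_one.mp h1
      subst ha'
      have ha'Na : a' ∈ G.neighborFinset a := hN' (mem_singleton_self a')
      have hba' : b ≠ a' := by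
        intro h; subst h; exact hbadj ((G.mem_neighborFinset _ _).mp ha'Na)
      have hbad : ((G.neighborFinset b).filter
          (fun b' => b' ∈ insert a' (G.neighborFinset a'))).card ≤ 1 := by
        apply card_le_one.mpr
        intro x hx y hy
        simp only [mem_filter, mem_insert, SimpleGraph.mem_neighborFinset] at hx hy
        by_contra hxy
        have hxa' : G.Adj a' x := by
          rcases hx.2 with h | h
          · exact absurd ((G.mem_neighborFinset _ _).mpr (h ▸ hx.1)) (hdisj' a' ha'Na)
          · exact h
        have hya' : G.Adj a' y := by
          rcases hy.2 with h | h
          · exact absurd ((G.mem_neighborFinset _ _).mpr (h ▸ hy.1)) (hdisj' a' ha'Na)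
          · exact h
        exact hsf b x a' y hx.1.ne hxa'.ne.symm hya'.ne hy.1.ne.symm hba' hxy
          ⟨hx.1, hxa'.symm, hya', hy.1.symm⟩
      have hsplit := card_filter_add_card_filter_not
        (s := G.neighborFinset b)
        (p := fun b' => b' ∈ insert a' (G.neighborFinset a'))
      have hFeq : (G.neighborFinset b).filter
          (fun b' => ∃ a'' ∈ ({a'} : Finset V), b' ∉ insert a'' (G.neighborFinset a'')) =
          (G.neighborFinset b).filter
          (fun b' => ¬ b' ∈ insert a' (G.neighborFinset a')) := by
        apply filter_congr; intro x _; simp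
      rw [hFeq]
      have hcard : ℓ ≤ ((G.neighborFinset b).filter
          (fun b' => ¬ b' ∈ insert a' (G.neighborFinset a'))).card + 1 := by
        rw [hl, ← SimpleGraph.card_neighborFinset_eq_degree, ← hsplit]
        omega
      have hk3 : 3 ≤ k := le_trans hl3 hkl
      have h1' : 2 ≤ ((G.neighborFinset b).filter
          (fun b' => ¬ b' ∈ insert a' (G.neighborFinset a'))).card := by omega
      calc ℓ * 1 = ℓ := by ring
        _ ≤ k := hkl
        _ ≤ k * 2 := by omega
        _ ≤ k * _ := Nat.mul_le_mul_left k h1'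
  · obtain ⟨a₁, h1, a₂, hm2, hne⟩ := one_lt_card.mp h2
    have hFeq : (G.neighborFinset b).filter
        (fun b' => ∃ a' ∈ N', b' ∉ insert a' (G.neighborFinset a')) =
        G.neighborFinset b := by
      apply filter_true_of_mem
      intro b' hb'
      by_contra hcon
      push_neg at hcon
      have hA1 : G.Adj a₁ b' := by
        rcases mem_insert.mp (hcon a₁ h1) with h | h
        · exact absurd (h ▸ hb') (hdisj' a₁ (hN' h1))
        · exact (G.mem_neighborFinset _ _).mp h
      have hA2 : G.Adj a₂ b' := by
        rcases mem_insert.mp (hcon a₂ hm2) with h | h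
        · exact absurd (h ▸ hb') (hdisj' a₂ (hN' hm2))
        · exact (G.mem_neighborFinset _ _).mp h
      have haa1 : G.Adj a a₁ := (G.mem_neighborFinset _ _).mp (hN' h1)
      have haa2 : G.Adj a a₂ := (G.mem_neighborFinset _ _).mp (hN' hm2)
      have hab' : a ≠ b' := by
        intro h
        exact hbadj (((G.mem_neighborFinset _ _).mp (h ▸ hb')).symm)
      exact hsf a a₁ b' a₂ haa1.ne hA1.ne hA2.ne.symm haa2.ne.symm hab' hne
        ⟨haa1, hA1, hA2.symm, haa2.symm⟩
    rw [hFeq]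
    have : N'.card ≤ k := by
      rw [hk, ← SimpleGraph.card_neighborFinset_eq_degree]
      exact card_le_card hN'
    calc ℓ * N'.card ≤ ℓ * k := Nat.mul_le_mul_left ℓ this
      _ = k * ℓ := Nat.mul_comm ℓ k
      _ = k * (G.neighborFinset b).card := by
        rw [hl, SimpleGraph.card_neighborFinset_eq_degree]
end

section
/- Let G be a square-free simple graph, a, b vertices with b ∉ {a} ∪ N(a), |N(a)| = k ≥ |N(b)| = ℓ ≥ 3, and N(a) ∩ N(b) = ∅. If N' ⊆ N(a) has |N'| ≥ 2, then cmp(N') = N(b), where cmp(N') = {b' ∈ N(b) : ∃ a' ∈ N', b' ∉ {a'} ∪ N(a')}. -/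
open Finset

theorem stmt12 {V : Type*} [Fintype V] [DecidableEq V] (G : SimpleGraph V)
    [DecidableRel G.Adj] (hsf : IsSquareFree G)
    (a b : V) (hb : b ∉ insert a (G.neighborFinset a))
    (k ℓ : ℕ) (hk : k = G.degree a) (hl : ℓ = G.degree b)
    (hkl : ℓ ≤ k) (hl3 : 3 ≤ ℓ)
    (hdisj : G.neighborFinset a ∩ G.neighborFinset b = ∅)
    (N' : Finset V) (hN' : N' ⊆ G.neighborFinset a) (hN2 : 2 ≤ N'.card) :
    (G.neighborFinset b).filter
        (fun b' => ∃ a' ∈ N', b' ∉ insert a' (G.neighborFinset a')) =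
      G.neighborFinset b := by
  apply Finset.filter_true_of_mem
  intro b' hb'
  obtain ⟨a1, h1, a2, h2, hne⟩ := Finset.one_lt_card.mp hN2
  have ha1 : G.Adj a a1 := by simpa using hN' h1
  have ha2 : G.Adj a a2 := by simpa using hN' h2
  have hbb' : G.Adj b b' := by simpa using hb'
  have hb'na : b' ∉ G.neighborFinset a := by
    intro h
    have : b' ∈ G.neighborFinset a ∩ G.neighborFinset b := by
      simp [h, hbb']
    simp [hdisj] at this
  have hb'1 : b' ≠ a1 := fun h => hb'na (by simpa [h] using hN' h1)
  have hb'2 : b' ≠ a2 := fun h => hb'na (by simpa [h] using hN' h2)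
  have hab' : a ≠ b' := by
    rintro rfl
    exact hb (by simp [hbb'.symm])
  -- b' not adjacent to both a1 and a2
  by_cases hadj1 : G.Adj a1 b'
  · refine ⟨a2, h2, ?_⟩
    simp only [Finset.mem_insert, SimpleGraph.mem_neighborFinset]
    push_neg
    refine ⟨hb'2, fun hadj2 => ?_⟩
    exact hsf a a1 b' a2 ha1.ne hb'1.symm hb'2 ha2.ne.symm hab' hne
      ⟨ha1, hadj1, hadj2.symm, ha2.symm⟩
  · exact ⟨a1, h1, by simp [hb'1, hadj1]⟩
end

section
/- Let H be a simple graph with n₀ vertices and m > n₀ edges, let d ≥ 3 be fixed, and let G*(n,d) be the d-regular configuration multigraph on n vertices (obtained from a uniformly random perfect matching of {1,…,n}×{1,…,d}). Then P(H ⊆ G*(n,d)) ≤ n^{n₀} · (d/(n−2m))^m for all n > 2m; in particular this probability tends to 0 as n → ∞. -/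
open Finset Filter
open scoped Classical

/-- A uniformly random pairing (perfect matching) of the `n * d` half-edges
`Fin n × Fin d`: a fixed-point-free involution. -/
def Pairing (n d : ℕ) : Type :=
  {f : (Fin n × Fin d) ≃ (Fin n × Fin d) // (∀ x, f (f x) = x) ∧ ∀ x, f x ≠ x}

instance (n d : ℕ) : Finite (Pairing n d) := by
  unfold Pairing; infer_instance

noncomputable instance (n d : ℕ) : Fintype (Pairing n d) :=
  Fintype.ofFinite _

/-- The multigraph of the configuration model has an edge between `i` and `j`. -/
def hasEdge {n d : ℕ} (f : Pairing n d) (i j : Fin n) : Prop :=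
  ∃ k l : Fin d, f.1 (i, k) = (j, l)

/-- The configuration multigraph contains a copy of `H`. -/
def containsCopy {n₀ : ℕ} (H : SimpleGraph (Fin n₀)) {n d : ℕ} (f : Pairing n d) : Prop :=
  ∃ φ : Fin n₀ ↪ Fin n, ∀ u v : Fin n₀, H.Adj u v → hasEdge f (φ u) (φ v)

/-- The probability that `G*(n,d)` contains a copy of `H`. -/
noncomputable def probContains (d n₀ : ℕ) (H : SimpleGraph (Fin n₀)) (n : ℕ) : ℝ :=
  ((Finset.univ.filter (fun f : Pairing n d => containsCopy H f)).card : ℝ) /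
    (Fintype.card (Pairing n d) : ℝ)

/-! A pairing of `N` half-edges is a fixed-point-free involution; let `M N` be their number.
Sorting pairings by the partner of one half-edge gives `M (N + 2) = (N + 1) M N`, hence
`((n - 2m) d) ^ m * M (nd - 2m) ≤ M (nd)`. Prescribing `m` disjoint pairs leaves at most
`M (nd - 2m)` pairings, and a copy of `H` is witnessed by an embedding (at most `n ^ n₀` choices)
together with a pair of half-edges for each of the `m` edges (`d²` choices each). The union bound
gives `n ^ n₀ (d / (n - 2m)) ^ m`, which tends to `0` because `m > n₀`. -/

open Function

abbrev FixedPointFreeInvolution (α : Type*) : Type _ := {f : α → α // Involutive f ∧ ∀ x, f x ≠ x}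

noncomputable instance {α : Type*} [Finite α] : Fintype (FixedPointFreeInvolution α) :=
  Fintype.ofFinite _

noncomputable def perfectMatchingCount (k : ℕ) : ℕ :=
  Fintype.card (FixedPointFreeInvolution (Fin k))

theorem Function.Involutive.sym2_mk_eq_of_mem {α : Type*} {f : α → α} (hf : Involutive f)
    {a b x : α} (hab : f a = b) (hx : x ∈ s(a, b)) : s(x, f x) = s(a, b) := by
  rcases Sym2.mem_iff.1 hx with rfl | rfl
  · rw [hab]
  · rw [← hab, hf, Sym2.eq_swap]

namespace FixedPointFreeInvolution

variable {α β : Type*}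

def congr (e : α ≃ β) : FixedPointFreeInvolution α ≃ FixedPointFreeInvolution β :=
  (e.arrowCongr e).subtypeEquiv fun f => by
    simp only [Involutive, Equiv.arrowCongr_apply, comp_apply, e.surjective.forall,
      Equiv.symm_apply_apply, ne_eq, EmbeddingLike.apply_eq_iff_eq]

noncomputable def eqOnEquivCompl (s : Finset α) (p : α → α) (hps : ∀ x ∈ s, p x ∈ s)
    (hpp : ∀ x ∈ s, p (p x) = x) (hpx : ∀ x ∈ s, p x ≠ x) :
    {f : FixedPointFreeInvolution α // ∀ x ∈ s, f.1 x = p x} ≃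
      FixedPointFreeInvolution {x // x ∉ s} where
  toFun f := ⟨fun x => ⟨f.1.1 x, fun h => x.2 <| by
      simpa only [f.1.2.1 x, ← f.2 _ h] using hps _ h⟩,
    fun x => Subtype.ext (f.1.2.1 x), fun x h => f.1.2.2 x (congrArg Subtype.val h)⟩
  invFun g := ⟨⟨fun x => if h : x ∈ s then p x else g.1 ⟨x, h⟩, fun x => by
      by_cases h : x ∈ s
      · simp only [dif_pos h, dif_pos (hps x h), hpp x h]
      · simp only [dif_neg h, dif_neg (g.1 ⟨x, h⟩).2, Subtype.coe_eta, g.2.1 ⟨x, h⟩], fun x => by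
      by_cases h : x ∈ s
      · simpa only [dif_pos h] using hpx x h
      · simpa only [dif_neg h, ne_eq, Subtype.ext_iff] using g.2.2 ⟨x, h⟩⟩,
    fun x hx => dif_pos hx⟩
  left_inv f := by
    ext x
    by_cases h : x ∈ s
    · simp [dif_pos h, f.2 x h]
    · simp [dif_neg h]
  right_inv g := by
    ext x
    simp [dif_neg x.2]

variable [Fintype α]

theorem card_eq_perfectMatchingCount :
    Fintype.card (FixedPointFreeInvolution α) = perfectMatchingCount (Fintype.card α) :=
  Fintype.card_congr (congr (Fintype.equivFin α))

theorem card_filter_eqOn (s : Finset α) (p : α → α) (hps : ∀ x ∈ s, p x ∈ s)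
    (hpp : ∀ x ∈ s, p (p x) = x) (hpx : ∀ x ∈ s, p x ≠ x) :
    #{f : FixedPointFreeInvolution α | ∀ x ∈ s, f.1 x = p x} =
      perfectMatchingCount (Fintype.card α - #s) := by
  rw [← Fintype.card_subtype, Fintype.card_congr (eqOnEquivCompl s p hps hpp hpx),
    card_eq_perfectMatchingCount, Fintype.card_subtype_compl, Fintype.card_coe]

theorem card_filter_apply_eq_le {ι : Type*} [Fintype ι] (a b : ι → α)
    (hab : Injective fun i => s(a i, b i)) :
    #{f : FixedPointFreeInvolution α | ∀ i, f.1 (a i) = b i} ≤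
      perfectMatchingCount (Fintype.card α - 2 * Fintype.card ι) := by
  rcases Finset.eq_empty_or_nonempty {f : FixedPointFreeInvolution α | ∀ i, f.1 (a i) = b i}
    with hempty | ⟨f₀, hf₀⟩
  · simp [hempty]
  replace hf₀ : ∀ i, f₀.1 (a i) = b i := (Finset.mem_filter.1 hf₀).2
  set s : Finset α := univ.biUnion fun i => {a i, b i}
  have hmem {x : α} : x ∈ s ↔ ∃ i, x ∈ s(a i, b i) := by simp [s]
  have horbit {f : FixedPointFreeInvolution α} (hf : ∀ i, f.1 (a i) = b i) {i : ι} {x : α}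
      (hx : x ∈ s(a i, b i)) : s(x, f.1 x) = s(a i, b i) :=
    f.2.1.sym2_mk_eq_of_mem (hf i) hx
  have hcard : #s = 2 * Fintype.card ι := by
    rw [Finset.card_biUnion fun i _ j _ hij => Finset.disjoint_left.2 fun x hi hj => hij <| hab <|
      (horbit hf₀ (by simpa using hi)).symm.trans (horbit hf₀ (by simpa using hj))]
    have hpair (i : ι) : #{a i, b i} = 2 := Finset.card_pair fun h => f₀.2.2 (a i) (h ▸ hf₀ i)
    simp [hpair, mul_comm]
  calc #{f : FixedPointFreeInvolution α | ∀ i, f.1 (a i) = b i}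
      ≤ #{f : FixedPointFreeInvolution α | ∀ x ∈ s, f.1 x = f₀.1 x} := by
        refine Finset.card_le_card fun f hf => Finset.mem_filter.2 ⟨mem_univ f, fun x hx => ?_⟩
        obtain ⟨i, hi⟩ := hmem.1 hx
        exact Sym2.congr_right.1 <|
          (horbit (Finset.mem_filter.1 hf).2 hi).trans (horbit hf₀ hi).symm
    _ = perfectMatchingCount (Fintype.card α - 2 * Fintype.card ι) := by
        rw [card_filter_eqOn s f₀.1 ?_ (fun x _ => f₀.2.1 x) (fun x _ => f₀.2.2 x), hcard]
        intro x hx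
        obtain ⟨i, hi⟩ := hmem.1 hx
        exact hmem.2 ⟨i, horbit hf₀ hi ▸ Sym2.mem_mk_right x _⟩

end FixedPointFreeInvolution

open FixedPointFreeInvolution

theorem perfectMatchingCount_add_two (k : ℕ) :
    perfectMatchingCount (k + 2) = (k + 1) * perfectMatchingCount k := by
  have hfiber (b : Fin (k + 2)) (hb : b ≠ 0) :
      #{f : FixedPointFreeInvolution (Fin (k + 2)) | f.1 0 = b} = perfectMatchingCount k := by
    have hpair : ∀ f : FixedPointFreeInvolution (Fin (k + 2)),
        f.1 0 = b ↔ ∀ x ∈ ({0, b} : Finset _), f.1 x = Equiv.swap 0 b x := by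
      intro f
      refine ⟨fun h x hx => ?_, fun h => by simpa using h 0 (by simp)⟩
      rcases Finset.mem_insert.1 hx with rfl | hx
      · simpa using h
      · rw [Finset.mem_singleton.1 hx, Equiv.swap_apply_right, ← h, f.2.1]
    have := card_filter_eqOn {0, b} (Equiv.swap 0 b) (by simp) (by simp) (by simp [hb, hb.symm])
    rw [Finset.card_pair hb.symm, Fintype.card_fin, Nat.add_sub_cancel] at this
    convert this using 3 with f
    exact hpair f
  have hzero : #{f : FixedPointFreeInvolution (Fin (k + 2)) | f.1 0 = 0} = 0 :=
    Finset.card_eq_zero.2 (Finset.filter_eq_empty_iff.2 fun f _ => f.2.2 0)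
  rw [perfectMatchingCount, ← Finset.card_univ,
    Finset.card_eq_sum_card_fiberwise (fun f _ => Finset.mem_univ (f.1 0)),
    ← Finset.sum_erase_add _ _ (Finset.mem_univ 0), hzero, add_zero,
    Finset.sum_congr rfl fun b hb => hfiber b (Finset.ne_of_mem_erase hb), Finset.sum_const,
    Finset.card_erase_of_mem (Finset.mem_univ _), Finset.card_univ, Fintype.card_fin, smul_eq_mul]
  rfl

theorem pow_mul_perfectMatchingCount_le (k m : ℕ) :
    (k + 1) ^ m * perfectMatchingCount k ≤ perfectMatchingCount (k + 2 * m) := by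
  induction m with
  | zero => simp
  | succ m ih =>
    calc (k + 1) ^ (m + 1) * perfectMatchingCount k
        = (k + 1) * ((k + 1) ^ m * perfectMatchingCount k) := by ring
      _ ≤ (k + 2 * m + 1) * perfectMatchingCount (k + 2 * m) := by gcongr; omega
      _ = perfectMatchingCount (k + 2 * (m + 1)) := by
        rw [Nat.mul_succ, ← add_assoc, perfectMatchingCount_add_two]

def Pairing.equivFixedPointFreeInvolution (n d : ℕ) :
    Pairing n d ≃ FixedPointFreeInvolution (Fin n × Fin d) where
  toFun f := ⟨f.1, f.2⟩
  invFun g := ⟨g.2.1.toPerm, g.2⟩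
  left_inv _ := Subtype.ext (Equiv.ext fun _ => rfl)
  right_inv _ := rfl

theorem Pairing.card_eq (n d : ℕ) : Fintype.card (Pairing n d) = perfectMatchingCount (n * d) := by
  rw [Fintype.card_congr (Pairing.equivFixedPointFreeInvolution n d),
    card_eq_perfectMatchingCount, Fintype.card_prod, Fintype.card_fin, Fintype.card_fin]

theorem Pairing.card_filter_apply_eq_le {n d : ℕ} {ι : Type*} [Fintype ι]
    (a b : ι → Fin n × Fin d)
    (hab : Injective fun i => s(a i, b i)) :
    #{f : Pairing n d | ∀ i, f.1 (a i) = b i} ≤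
      perfectMatchingCount (n * d - 2 * Fintype.card ι) := by
  rw [Finset.card_equiv (Pairing.equivFixedPointFreeInvolution n d)
    (t := {g | ∀ i, g.1 (a i) = b i}) fun _ => by
      simp only [Finset.mem_filter, Finset.mem_univ, true_and]; rfl]
  simpa using FixedPointFreeInvolution.card_filter_apply_eq_le a b hab

theorem card_containsCopy_le {n₀ : ℕ} (H : SimpleGraph (Fin n₀)) [DecidableRel H.Adj] (n d : ℕ) :
    #{f : Pairing n d | containsCopy H f} ≤
      n ^ n₀ * (d * d) ^ #H.edgeFinset * perfectMatchingCount (n * d - 2 * #H.edgeFinset) := by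
  have hout (e : Sym2 (Fin n₀)) : s(e.out.1, e.out.2) = e := e.out_eq
  let event (φ : Fin n₀ ↪ Fin n) (c : H.edgeFinset → Fin d × Fin d) : Finset (Pairing n d) :=
    {f | ∀ e : H.edgeFinset, f.1 (φ e.1.out.1, (c e).1) = (φ e.1.out.2, (c e).2)}
  have hcover : ({f | containsCopy H f} : Finset (Pairing n d)) ⊆
      univ.biUnion fun φ => univ.biUnion fun c => event φ c := by
    intro f hf
    obtain ⟨φ, hφ⟩ := (Finset.mem_filter.1 hf).2
    have hadj (e : H.edgeFinset) : H.Adj e.1.out.1 e.1.out.2 := by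
      rw [← SimpleGraph.mem_edgeSet, hout]
      exact SimpleGraph.mem_edgeFinset.1 e.2
    choose k l hkl using fun e => hφ _ _ (hadj e)
    simp only [Finset.mem_biUnion, Finset.mem_univ, true_and]
    exact ⟨φ, fun e => (k e, l e), Finset.mem_filter.2 ⟨Finset.mem_univ f, hkl⟩⟩
  have hevent (φ : Fin n₀ ↪ Fin n) (c : H.edgeFinset → Fin d × Fin d) :
      #(event φ c) ≤ perfectMatchingCount (n * d - 2 * #H.edgeFinset) := by
    refine (Pairing.card_filter_apply_eq_le _ _ fun e e' h => ?_).trans_eq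
      (by rw [Fintype.card_coe])
    have := congrArg (Sym2.map Prod.fst) h
    simp only [Sym2.map_mk] at this
    rw [← Sym2.map_mk, ← Sym2.map_mk, hout, hout] at this
    exact Subtype.ext (Sym2.map.injective φ.injective this)
  calc #{f : Pairing n d | containsCopy H f}
      ≤ ∑ φ : Fin n₀ ↪ Fin n, ∑ c : H.edgeFinset → Fin d × Fin d, #(event φ c) :=
        (Finset.card_le_card hcover).trans <| Finset.card_biUnion_le.trans <|
          Finset.sum_le_sum fun _ _ => Finset.card_biUnion_le
    _ ≤ ∑ φ : Fin n₀ ↪ Fin n, ∑ c : H.edgeFinset → Fin d × Fin d,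
          perfectMatchingCount (n * d - 2 * #H.edgeFinset) := by
        gcongr with φ _ c; exact hevent φ c
    _ ≤ n ^ n₀ * (d * d) ^ #H.edgeFinset * perfectMatchingCount (n * d - 2 * #H.edgeFinset) := by
        simp only [Finset.sum_const, Finset.card_univ, smul_eq_mul, Fintype.card_fun,
          Fintype.card_prod, Fintype.card_fin, Fintype.card_coe, Fintype.card_embedding_eq]
        rw [mul_assoc]
        gcongr
        exact Nat.descFactorial_le_pow n n₀

theorem probContains_le {d n₀ : ℕ} (hd : 0 < d) (H : SimpleGraph (Fin n₀)) [DecidableRel H.Adj]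
    {n : ℕ} (hn : 2 * #H.edgeFinset < n) :
    probContains d n₀ H n ≤
      (n : ℝ) ^ n₀ * ((d : ℝ) / ((n : ℝ) - 2 * #H.edgeFinset)) ^ #H.edgeFinset := by
  set m := #H.edgeFinset
  have hgap : (0 : ℝ) < n - 2 * m := by
    rw [sub_pos]; exact_mod_cast hn
  have hgrowth : (((n : ℝ) - 2 * m) * d) ^ m * perfectMatchingCount (n * d - 2 * m) ≤
      perfectMatchingCount (n * d) := by
    have h2m : 2 * m ≤ n * d := hn.le.trans (Nat.le_mul_of_pos_right n hd)
    have key := pow_mul_perfectMatchingCount_le (n * d - 2 * m) m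
    rw [Nat.sub_add_cancel h2m] at key
    refine le_trans ?_ (Nat.cast_le.2 key)
    push_cast [Nat.cast_sub h2m]
    gcongr
    nlinarith [(Nat.one_le_cast (α := ℝ)).2 hd]
  have hcount := card_containsCopy_le H n d
  rw [probContains, Pairing.card_eq]
  refine div_le_of_le_mul₀ (Nat.cast_nonneg _) (by positivity) ?_
  calc (#{f : Pairing n d | containsCopy H f} : ℝ)
      ≤ (n : ℝ) ^ n₀ * (d * d) ^ m * perfectMatchingCount (n * d - 2 * m) := by
        exact_mod_cast hcount
    _ = (n : ℝ) ^ n₀ * ((d : ℝ) / (n - 2 * m)) ^ m *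
          ((((n : ℝ) - 2 * m) * d) ^ m * perfectMatchingCount (n * d - 2 * m)) := by
        rw [← mul_assoc, mul_assoc _ _ ((((n : ℝ) - 2 * m) * d) ^ m), ← mul_pow]
        field_simp
    _ ≤ (n : ℝ) ^ n₀ * ((d : ℝ) / (n - 2 * m)) ^ m * perfectMatchingCount (n * d) := by
        gcongr

theorem tendsto_pow_mul_div_sub_pow {a b : ℕ} (hab : a < b) (c K : ℝ) :
    Tendsto (fun x : ℝ => x ^ a * (K / (x - c)) ^ b) atTop (nhds 0) := by
  open Polynomial in
  have hdeg : (C (K ^ b) * X ^ a : ℝ[X]).degree < ((X - C c) ^ b).degree := by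
    rw [degree_pow, degree_X_sub_C, nsmul_one]
    exact (degree_C_mul_X_pow_le a _).trans_lt (by exact_mod_cast hab)
  convert Polynomial.div_tendsto_atTop_zero_of_degree_lt _ _ hdeg using 2 with x
  simp only [Polynomial.eval_mul, Polynomial.eval_C, Polynomial.eval_pow, Polynomial.eval_X,
    Polynomial.eval_sub, div_pow]
  ring

theorem stmt14 (d n₀ : ℕ) (hd : 3 ≤ d) (H : SimpleGraph (Fin n₀))
    [DecidableRel H.Adj] (m : ℕ) (hm : m = H.edgeFinset.card) (hmn : n₀ < m) :
    (∀ n : ℕ, 2 * m < n →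
      probContains d n₀ H n ≤ (n : ℝ) ^ n₀ * ((d : ℝ) / ((n : ℝ) - 2 * m)) ^ m) ∧
    Tendsto (probContains d n₀ H) atTop (nhds 0) := by
  subst hm
  have hbound (n : ℕ) (hn : 2 * #H.edgeFinset < n) := probContains_le (d := d) (by omega) H hn
  refine ⟨hbound, tendsto_of_tendsto_of_tendsto_of_le_of_le' tendsto_const_nhds
    ((tendsto_pow_mul_div_sub_pow hmn _ _).comp tendsto_natCast_atTop_atTop) ?_
    ((eventually_gt_atTop _).mono hbound)⟩
  exact Eventually.of_forall fun n => by unfold probContains; positivity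
end

section
/- Let G be a d-regular graph (d ≥ 4) containing no copy of H_d, and fix vertices a ≠ b and e ∈ N(a) with the property that b ∈ N(a) implies e = b. Define A = {(a',a'') : a' ∈ N(a)\{e}, a'' ∈ N(a')} and B = {(b',e') : b' ∈ N(b), e' ∈ N(b')}, and say (a',a'') ⊢ (b',e') if b' ∉ {a',a''} and (a'' ∈ N(b') implies e' = a''). Then for every A₀ ⊆ A, (d/(d−1))·|A₀| ≤ |cmp(A₀)|, where cmp(A₀) = {(b',e') ∈ B : ∃ (a',a'') ∈ A₀ with (a',a'') ⊢ (b',e')}. -/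
/-!
Count `cmp(A₀)` fibrewise over the neighbours `b'` of `b`. Each fibre has at most `d` elements;
call `b'` unsaturated if it has fewer. For unsaturated `b'`, every walk `(a', w) ∈ A₀` with
`a' ≠ b'` ends in `N[b']` (otherwise it alone would make the whole fibre compatible), and each such
end `w ≠ b'` lies in the fibre. So with `k` unsaturated vertices,
`|cmp(A₀)| ≥ d (d - k) + ∑_{b' unsaturated} |{ends adjacent to b'}|`, and the sum is recounted over
the ends `w` of `A₀`. Regularity and the absence of closed twins bound how many walks of `A₀` can
share a middle vertex or an end, and a case analysis on `k = 0`, `k = 1`, `1 < k < d`, `k = d`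
yields `d |A₀| ≤ (d - 1) |cmp(A₀)|`.
-/

open Finset

namespace SimpleGraph

variable {V : Type*} [Fintype V] (G : SimpleGraph V) [DecidableRel G.Adj] {d : ℕ}

-- For a `d`-regular graph this is `H_d`-freeness.
def ClosedTwinFree [DecidableEq V] : Prop :=
  ∀ u v : V, u ≠ v → insert u (G.neighborFinset u) ≠ insert v (G.neighborFinset v)

variable {G}

namespace IsRegularOfDegree

lemma card_neighborFinset (hreg : G.IsRegularOfDegree d) (v : V) : #(G.neighborFinset v) = d :=
  (G.card_neighborFinset_eq_degree v).trans (hreg.degree_eq v)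

lemma neighborFinset_eq_of_subset (hreg : G.IsRegularOfDegree d) {u v : V}
    (h : G.neighborFinset u ⊆ G.neighborFinset v) : G.neighborFinset u = G.neighborFinset v :=
  eq_of_subset_of_card_le h (hreg.card_neighborFinset v ▸ hreg.card_neighborFinset u ▸ le_rfl)

lemma card_insert_neighborFinset [DecidableEq V] (hreg : G.IsRegularOfDegree d) (v : V) :
    #(insert v (G.neighborFinset v)) = d + 1 := by
  rw [card_insert_of_notMem (by simp), hreg.card_neighborFinset]

lemma insert_neighborFinset_eq_of_subset [DecidableEq V] (hreg : G.IsRegularOfDegree d)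
    {u v : V} (h : insert u (G.neighborFinset u) ⊆ insert v (G.neighborFinset v)) :
    insert u (G.neighborFinset u) = insert v (G.neighborFinset v) :=
  eq_of_subset_of_card_le h
    (by rw [hreg.card_insert_neighborFinset, hreg.card_insert_neighborFinset])

end IsRegularOfDegree

end SimpleGraph

namespace Finset

variable {α β : Type*} [DecidableEq α] [DecidableEq β] (s : Finset (α × β))

def sectR (a : α) : Finset β := {p ∈ s | p.1 = a}.image Prod.snd

def sectL (b : β) : Finset α := {p ∈ s | p.2 = b}.image Prod.fst

variable {s}

@[simp] lemma mem_sectR {a : α} {b : β} : b ∈ s.sectR a ↔ (a, b) ∈ s := by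
  simp [sectR]

@[simp] lemma mem_sectL {a : α} {b : β} : a ∈ s.sectL b ↔ (a, b) ∈ s := by
  simp [sectL]

lemma card_sectR (a : α) : #(s.sectR a) = #{p ∈ s | p.1 = a} :=
  card_image_of_injOn fun _ hp _ hq h ↦
    Prod.ext ((mem_filter.1 hp).2.trans (mem_filter.1 hq).2.symm) h

lemma card_sectL (b : β) : #(s.sectL b) = #{p ∈ s | p.2 = b} :=
  card_image_of_injOn fun _ hp _ hq h ↦
    Prod.ext h ((mem_filter.1 hp).2.trans (mem_filter.1 hq).2.symm)

lemma card_eq_sum_card_sectR {t : Finset α} (h : ∀ p ∈ s, p.1 ∈ t) :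
    #s = ∑ a ∈ t, #(s.sectR a) := by
  simp only [card_sectR]
  exact card_eq_sum_card_fiberwise h

lemma card_eq_sum_card_sectL {t : Finset β} (h : ∀ p ∈ s, p.2 ∈ t) :
    #s = ∑ b ∈ t, #(s.sectL b) := by
  simp only [card_sectL]
  exact card_eq_sum_card_fiberwise h

lemma sectL_subset_image_fst (b : β) : s.sectL b ⊆ s.image Prod.fst :=
  image_subset_image (filter_subset _ _)

lemma card_sectL_lt_card_image_fst {r : Finset (α × α)} (hr : ∀ p ∈ r, p.1 ≠ p.2) {a : α}
    (ha : a ∈ r.image Prod.fst) : #(r.sectL a) < #(r.image Prod.fst) :=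
  card_lt_card ⟨sectL_subset_image_fst a, fun h ↦ hr _ (mem_sectL.1 (h ha)) rfl⟩

lemma card_le_mul_card_image_fst {n : ℕ} (h : ∀ a ∈ s.image Prod.fst, #(s.sectR a) ≤ n) :
    #s ≤ n * #(s.image Prod.fst) :=
  card_le_mul_card_image s n fun a ha ↦ (card_sectR a).symm.trans_le (h a ha)

lemma sum_le_add_mul_of_le_of_ne {ι : Type*} [DecidableEq ι] {t : Finset ι} {f : ι → ℕ}
    {i₀ : ι} {n D M : ℕ} (ht : #t ≤ n + 1) (hf : ∀ i ∈ t, f i ≤ D)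
    (hM : ∀ i ∈ t, i ≠ i₀ → f i ≤ M) (hMD : M ≤ D) : ∑ i ∈ t, f i ≤ D + n * M := by
  by_cases hi₀ : i₀ ∈ t
  · rw [← add_sum_erase t f hi₀]
    have hsum : ∑ i ∈ t.erase i₀, f i ≤ #(t.erase i₀) * M :=
      sum_le_card_nsmul _ _ _ fun i hi ↦ hM i (mem_of_mem_erase hi) (ne_of_mem_erase hi)
    have hcard : #(t.erase i₀) ≤ n := by rw [card_erase_of_mem hi₀]; omega
    nlinarith [hf i₀ hi₀]
  · have hsum : ∑ i ∈ t, f i ≤ #t * M :=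
      sum_le_card_nsmul _ _ _ fun i hi ↦ hM i hi (ne_of_mem_of_not_mem hi hi₀)
    nlinarith

end Finset

namespace Compat

open SimpleGraph

variable {V : Type*} [Fintype V] [DecidableEq V] (G : SimpleGraph V) [DecidableRel G.Adj]
  (d : ℕ) (b : V) (A₀ : Finset (V × V))

def cmp : Finset (V × V) :=
  (Finset.univ.filter (fun q : V × V =>
      q.1 ∈ G.neighborFinset b ∧ q.2 ∈ G.neighborFinset q.1)).filter
    (fun q => ∃ p ∈ A₀, q.1 ≠ p.1 ∧ q.1 ≠ p.2 ∧
      (p.2 ∈ G.neighborFinset q.1 → q.2 = p.2))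

def unsaturated : Finset V :=
  {b' ∈ G.neighborFinset b | #((cmp G b A₀).sectR b') < d}

def adjEnds (b' : V) : Finset V :=
  {w ∈ G.neighborFinset b' | ∃ p ∈ A₀, p.1 ≠ b' ∧ p.2 = w}

def unsaturatedNear (w : V) : Finset V :=
  {b' ∈ unsaturated G d b A₀ | w ∈ adjEnds G A₀ b'}

variable {G d b A₀}

local notation "𝒰" => unsaturated G d b A₀
local notation "𝒯" => A₀.image Prod.fst
local notation "ℰ" => A₀.image Prod.snd

lemma mem_cmp {b' e' : V} :
    (b', e') ∈ cmp G b A₀ ↔ G.Adj b b' ∧ G.Adj b' e' ∧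
      ∃ p ∈ A₀, b' ≠ p.1 ∧ b' ≠ p.2 ∧ (G.Adj b' p.2 → e' = p.2) := by
  simp [cmp, and_assoc]

lemma mem_adjEnds {b' w : V} :
    w ∈ adjEnds G A₀ b' ↔ G.Adj b' w ∧ ∃ a', (a', w) ∈ A₀ ∧ a' ≠ b' := by
  simp [adjEnds]

lemma sectR_subset_neighborFinset (hA : ∀ p ∈ A₀, G.Adj p.1 p.2) (a' : V) :
    A₀.sectR a' ⊆ G.neighborFinset a' := fun _ h ↦
  (mem_neighborFinset _ _ _).2 (hA _ (mem_sectR.1 h))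

lemma sectL_subset_neighborFinset (hA : ∀ p ∈ A₀, G.Adj p.1 p.2) (w : V) :
    A₀.sectL w ⊆ G.neighborFinset w := fun _ h ↦
  (mem_neighborFinset _ _ _).2 (hA _ (mem_sectL.1 h)).symm

lemma card_sectR_le (hreg : G.IsRegularOfDegree d) (hA : ∀ p ∈ A₀, G.Adj p.1 p.2) (a' : V) :
    #(A₀.sectR a') ≤ d :=
  (card_le_card (sectR_subset_neighborFinset hA a')).trans_eq (hreg.card_neighborFinset a')

lemma card_sectR_cmp_le (hreg : G.IsRegularOfDegree d) (b' : V) :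
    #((cmp G b A₀).sectR b') ≤ d := by
  refine (card_le_card fun e' he' ↦ ?_).trans_eq (hreg.card_neighborFinset b')
  simpa using (mem_cmp.1 (mem_sectR.1 he')).2.1

lemma adjEnds_subset_sectR_cmp {b' : V} (hb' : G.Adj b b') :
    adjEnds G A₀ b' ⊆ (cmp G b A₀).sectR b' := by
  intro w hw
  obtain ⟨hadj, a', ha', hne⟩ := mem_adjEnds.1 hw
  exact mem_sectR.2 (mem_cmp.2 ⟨hb', hadj, (a', w), ha', hne.symm, hadj.ne, fun _ ↦ rfl⟩)

lemma adjEnds_subset_image_snd (b' : V) : adjEnds G A₀ b' ⊆ ℰ := fun w hw ↦ by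
  obtain ⟨-, a', ha', -⟩ := mem_adjEnds.1 hw
  exact mem_image_of_mem Prod.snd ha'

lemma le_card_cmp (hreg : G.IsRegularOfDegree d) :
    d * (d - #𝒰) + ∑ b' ∈ 𝒰, #(adjEnds G A₀ b') ≤ #(cmp G b A₀) := by
  have hsub : 𝒰 ⊆ G.neighborFinset b := filter_subset _ _
  have hfull : ∀ b' ∈ G.neighborFinset b \ 𝒰, #((cmp G b A₀).sectR b') = d := by
    intro b' hb'
    obtain ⟨hbb', hnot⟩ := mem_sdiff.1 hb'
    have := card_sectR_cmp_le (b := b) (A₀ := A₀) hreg b'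
    have : ¬ #((cmp G b A₀).sectR b') < d := fun h ↦ hnot (mem_filter.2 ⟨hbb', h⟩)
    omega
  have hcard : #(G.neighborFinset b \ 𝒰) = d - #𝒰 := by
    rw [card_sdiff_of_subset hsub, hreg.card_neighborFinset]
  rw [card_eq_sum_card_sectR (t := G.neighborFinset b) fun q hq ↦
      (mem_neighborFinset _ _ _).2 (mem_cmp.1 hq).1, ← sum_sdiff hsub, sum_congr rfl hfull,
    sum_const, hcard, smul_eq_mul, mul_comm]
  gcongr with b' hb'
  exact adjEnds_subset_sectR_cmp ((mem_neighborFinset _ _ _).1 (hsub hb'))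

-- Otherwise the walk `(a', w)` alone would make every `(b', e')` with `e' ∈ N(b')` compatible.
lemma mem_insert_neighborFinset_of_mem_unsaturated (hreg : G.IsRegularOfDegree d)
    {b' a' w : V} (hb' : b' ∈ 𝒰) (hw : (a', w) ∈ A₀) (hne : a' ≠ b') :
    w ∈ insert b' (G.neighborFinset b') := by
  obtain ⟨hbb', hlt⟩ := mem_filter.1 hb'
  by_contra hfar
  simp only [mem_insert, mem_neighborFinset, not_or] at hfar
  have hsub : G.neighborFinset b' ⊆ (cmp G b A₀).sectR b' := fun e' he' ↦
    mem_sectR.2 (mem_cmp.2 ⟨(mem_neighborFinset _ _ _).1 hbb', (mem_neighborFinset _ _ _).1 he',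
      (a', w), hw, hne.symm, Ne.symm hfar.1, fun h ↦ absurd h hfar.2⟩)
  have := card_le_card hsub
  rw [hreg.card_neighborFinset] at this
  omega

lemma mem_adjEnds_of_mem_unsaturated (hreg : G.IsRegularOfDegree d) {b' a' w : V}
    (hb' : b' ∈ 𝒰) (hw : (a', w) ∈ A₀) (hne : a' ≠ b') (hwb' : w ≠ b') :
    w ∈ adjEnds G A₀ b' := by
  have := mem_insert_neighborFinset_of_mem_unsaturated hreg hb' hw hne
  rw [mem_insert, mem_neighborFinset] at this
  exact mem_adjEnds.2 ⟨this.resolve_left hwb', a', hw, hne⟩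

lemma unsaturated_erase_subset_unsaturatedNear (hreg : G.IsRegularOfDegree d) {w : V}
    (hw : 1 < #(A₀.sectL w)) : (𝒰).erase w ⊆ unsaturatedNear G d b A₀ w := by
  intro b' hb'
  obtain ⟨hne, hb'⟩ := mem_erase.1 hb'
  obtain ⟨a', ha', ha'ne⟩ := exists_mem_ne hw b'
  exact mem_filter.2
    ⟨hb', mem_adjEnds_of_mem_unsaturated hreg hb' (mem_sectL.1 ha') ha'ne hne.symm⟩

lemma card_unsaturated_le_card_unsaturatedNear_add_two (hreg : G.IsRegularOfDegree d) {w : V}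
    (hw : w ∈ ℰ) : #𝒰 ≤ #(unsaturatedNear G d b A₀ w) + 2 := by
  obtain ⟨⟨a', w⟩, ha', rfl⟩ := mem_image.1 hw
  dsimp only
  have hsub : ((𝒰).erase w).erase a' ⊆ unsaturatedNear G d b A₀ w := by
    intro b' hb'
    obtain ⟨hne', hne, hb'⟩ := by simpa only [mem_erase] using hb'
    exact mem_filter.2
      ⟨hb', mem_adjEnds_of_mem_unsaturated hreg hb' ha' (Ne.symm hne') (Ne.symm hne)⟩
  have := card_le_card hsub
  have := pred_card_le_card_erase (s := 𝒰) (a := w)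
  have := pred_card_le_card_erase (s := (𝒰).erase w) (a := a')
  omega

lemma sum_card_adjEnds :
    ∑ b' ∈ 𝒰, #(adjEnds G A₀ b') = ∑ w ∈ ℰ, #(unsaturatedNear G d b A₀ w) := by
  have hends (b' : V) :
      adjEnds G A₀ b' = (ℰ).bipartiteAbove (fun b' w ↦ w ∈ adjEnds G A₀ b') b' := by
    rw [bipartiteAbove, filter_mem_eq_inter, inter_eq_right.2 (adjEnds_subset_image_snd b')]
  rw [sum_congr rfl fun b' _ ↦ congrArg card (hends b')]
  exact sum_card_bipartiteAbove_eq_sum_card_bipartiteBelow _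

lemma unsaturated_erase_subset_neighborFinset (hreg : G.IsRegularOfDegree d) {w : V}
    (hw : 1 < #(A₀.sectL w)) : (𝒰).erase w ⊆ G.neighborFinset w :=
  fun _ hb' ↦ (mem_neighborFinset _ _ _).2
    (mem_adjEnds.1 (mem_filter.1 (unsaturated_erase_subset_unsaturatedNear hreg hw hb')).2).1.symm

lemma image_snd_subset_insert_neighborFinset (hreg : G.IsRegularOfDegree d)
    (hA : ∀ p ∈ A₀, G.Adj p.1 p.2) {β : V} (hβ : β ∈ 𝒰) :
    ℰ ⊆ insert β (G.neighborFinset β) := by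
  intro _ hw
  obtain ⟨⟨a', w⟩, ha', rfl⟩ := mem_image.1 hw
  by_cases h : a' = β
  · subst h
    exact mem_insert_of_mem ((mem_neighborFinset _ _ _).2 (hA _ ha'))
  · exact mem_insert_neighborFinset_of_mem_unsaturated hreg hβ ha' h

lemma card_image_snd_le (hreg : G.IsRegularOfDegree d) (hH : G.ClosedTwinFree)
    (hA : ∀ p ∈ A₀, G.Adj p.1 p.2) (hk : 1 < #𝒰) : #ℰ ≤ d := by
  obtain ⟨β₁, hβ₁, β₂, hβ₂, hne⟩ := one_lt_card.1 hk
  by_contra! hlt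
  have heq {β : V} (hβ : β ∈ 𝒰) : ℰ = insert β (G.neighborFinset β) :=
    eq_of_subset_of_card_le (image_snd_subset_insert_neighborFinset hreg hA hβ)
      (by rw [hreg.card_insert_neighborFinset]; omega)
  exact hH β₁ β₂ hne ((heq hβ₁).symm.trans (heq hβ₂))

-- A full `sectR a'` would lie in `N[b']`: either `a'`, `b'` are closed twins, or
-- `N(a') = N(b')` and the fibre of `cmp` over `b'` is full.
lemma card_sectR_le_pred (hreg : G.IsRegularOfDegree d) (hH : G.ClosedTwinFree)
    (hA : ∀ p ∈ A₀, G.Adj p.1 p.2) {b' a' : V} (hb' : b' ∈ 𝒰) (hne : a' ≠ b') :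
    #(A₀.sectR a') ≤ d - 1 := by
  by_contra! hlt
  have hfull : A₀.sectR a' = G.neighborFinset a' :=
    eq_of_subset_of_card_le (sectR_subset_neighborFinset hA a')
      (by rw [hreg.card_neighborFinset]; omega)
  have hnear : G.neighborFinset a' ⊆ insert b' (G.neighborFinset b') := fun _ hw ↦
    mem_insert_neighborFinset_of_mem_unsaturated hreg hb' (mem_sectR.1 (hfull ▸ hw)) hne
  by_cases hadj : G.Adj a' b'
  · refine hH a' b' hne (hreg.insert_neighborFinset_eq_of_subset (insert_subset ?_ hnear))
    exact mem_insert_of_mem ((mem_neighborFinset _ _ _).2 hadj.symm)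
  · have hN : G.neighborFinset a' = G.neighborFinset b' := by
      refine hreg.neighborFinset_eq_of_subset fun w hw ↦
        (mem_insert.1 (hnear hw)).resolve_left ?_
      rintro rfl
      exact hadj ((mem_neighborFinset _ _ _).1 hw)
    obtain ⟨hbb', hlt'⟩ := mem_filter.1 hb'
    have hsat : G.neighborFinset b' ⊆ (cmp G b A₀).sectR b' := fun w hw ↦
      adjEnds_subset_sectR_cmp ((mem_neighborFinset _ _ _).1 hbb') <| mem_adjEnds.2
        ⟨(mem_neighborFinset _ _ _).1 hw, a', mem_sectR.1 (hfull ▸ hN ▸ hw), hne⟩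
    have := card_le_card hsat
    rw [hreg.card_neighborFinset] at this
    omega

lemma card_sectL_le_one (hreg : G.IsRegularOfDegree d) (hH : G.ClosedTwinFree)
    (hk : #𝒰 = d) {w : V} (hw : w ∈ 𝒰) : #(A₀.sectL w) ≤ 1 := by
  by_contra! h2
  have hNF : 𝒰 = G.neighborFinset b :=
    eq_of_subset_of_card_le (filter_subset _ _) (by rw [hk, hreg.card_neighborFinset])
  have hbw : G.Adj b w := (mem_neighborFinset _ _ _).1 (filter_subset _ _ hw)
  refine hH b w hbw.ne (hreg.insert_neighborFinset_eq_of_subset (insert_subset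
    (mem_insert_of_mem ((mem_neighborFinset _ _ _).2 hbw.symm)) fun b' hb' ↦ ?_))
  by_cases h : b' = w
  · subst h
    exact mem_insert_self _ _
  · exact mem_insert_of_mem
      (unsaturated_erase_subset_neighborFinset hreg h2 (mem_erase.2 ⟨h, hNF ▸ hb'⟩))

lemma card_sectL_add_card_unsaturated_le_of_mem_unsaturated (hreg : G.IsRegularOfDegree d)
    (hA : ∀ p ∈ A₀, G.Adj p.1 p.2) (hb : b ∉ 𝒯) {w : V} (hw : w ∈ 𝒰)
    (h2 : 1 < #(A₀.sectL w)) : #(A₀.sectL w) + #𝒰 ≤ d + #(A₀.sectL w ∩ 𝒰) := by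
  have hwb : G.Adj w b := ((mem_neighborFinset _ _ _).1 (filter_subset _ _ hw)).symm
  have hsub : A₀.sectL w ∪ 𝒰 ⊆ (insert w (G.neighborFinset w)).erase b := by
    intro x hx
    rcases mem_union.1 hx with hx | hx
    · exact mem_erase.2 ⟨ne_of_mem_of_not_mem (sectL_subset_image_fst w hx) hb,
        mem_insert_of_mem (sectL_subset_neighborFinset hA w hx)⟩
    · refine mem_erase.2 ⟨((mem_neighborFinset _ _ _).1 (filter_subset _ _ hx)).ne', ?_⟩
      by_cases h : x = w
      · subst h
        exact mem_insert_self _ _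
      · exact mem_insert_of_mem
          (unsaturated_erase_subset_neighborFinset hreg h2 (mem_erase.2 ⟨h, hx⟩))
  have := card_le_card hsub
  rw [card_erase_of_mem (mem_insert_of_mem ((mem_neighborFinset _ _ _).2 hwb)),
    hreg.card_insert_neighborFinset] at this
  have := card_union_add_card_inter (A₀.sectL w) (𝒰)
  omega

lemma mul_card_le_of_card_unsaturated_eq_zero (hreg : G.IsRegularOfDegree d)
    (hA : ∀ p ∈ A₀, G.Adj p.1 p.2) (ht : #𝒯 ≤ d - 1) (hk : #𝒰 = 0) :
    d * #A₀ ≤ (d - 1) * #(cmp G b A₀) := by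
  have hs := le_card_cmp (b := b) (A₀ := A₀) hreg
  rw [hk, Nat.sub_zero] at hs
  have hm := card_le_mul_card_image_fst fun a' _ ↦ card_sectR_le hreg hA a'
  calc d * #A₀ ≤ d * (d * (d - 1)) := by gcongr; exact hm.trans (by gcongr)
    _ = (d - 1) * (d * d) := by ring
    _ ≤ (d - 1) * #(cmp G b A₀) := by gcongr; omega

lemma mul_card_le_of_card_unsaturated_eq_one (hd : 4 ≤ d) (hreg : G.IsRegularOfDegree d)
    (hH : G.ClosedTwinFree) (hA : ∀ p ∈ A₀, G.Adj p.1 p.2) (ht : #𝒯 ≤ d - 1) (hk : #𝒰 = 1) :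
    d * #A₀ ≤ (d - 1) * #(cmp G b A₀) := by
  obtain ⟨β, hβ⟩ := card_eq_one.1 hk
  have hβNF : β ∈ 𝒰 := hβ ▸ mem_singleton_self β
  set v := #(adjEnds G A₀ β)
  have hs : d * (d - 1) + v ≤ #(cmp G b A₀) := by
    simpa only [hβ, sum_singleton, card_singleton] using le_card_cmp (b := b) (A₀ := A₀) hreg
  have hsectR {a'} (hne : a' ≠ β) : #(A₀.sectR a') ≤ min (d - 1) (v + 1) := by
    refine le_min (card_sectR_le_pred hreg hH hA hβNF hne) ?_
    calc #(A₀.sectR a') ≤ #(insert β (adjEnds G A₀ β)) := card_le_card fun w hw ↦ by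
          by_cases h : w = β
          · exact h ▸ mem_insert_self _ _
          · exact mem_insert_of_mem
              (mem_adjEnds_of_mem_unsaturated hreg hβNF (mem_sectR.1 hw) hne h)
      _ ≤ v + 1 := card_insert_le _ _
  have hm : #A₀ ≤ d + (d - 2) * min (d - 1) (v + 1) := by
    rw [card_eq_sum_card_sectR (t := 𝒯) fun p hp ↦ mem_image_of_mem _ hp]
    exact sum_le_add_mul_of_le_of_ne (i₀ := β) (by omega) (fun a' _ ↦ card_sectR_le hreg hA a')
      (fun a' _ hne ↦ hsectR hne) ((min_le_left _ _).trans (by omega))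
  have harith : d * (d + (d - 2) * min (d - 1) (v + 1)) ≤ (d - 1) * (d * (d - 1) + v) := by
    obtain ⟨n, rfl⟩ : ∃ n, d = n + 4 := ⟨d - 4, by omega⟩
    simp only [show n + 4 - 2 = n + 2 by omega, show n + 4 - 1 = n + 3 by omega]
    rcases le_or_gt (n + 3) (v + 1) with h | h
    · rw [min_eq_left h]
      nlinarith
    · rw [min_eq_right h.le]
      nlinarith [Nat.mul_le_mul_right (n ^ 2 + 5 * n + 5) (show v ≤ n + 1 by omega)]
  calc d * #A₀ ≤ d * (d + (d - 2) * min (d - 1) (v + 1)) := by gcongr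
    _ ≤ (d - 1) * (d * (d - 1) + v) := harith
    _ ≤ (d - 1) * #(cmp G b A₀) := by gcongr

lemma card_sectL_add_card_unsaturated_le_card_unsaturatedNear (hd : 4 ≤ d)
    (hreg : G.IsRegularOfDegree d) (hA : ∀ p ∈ A₀, G.Adj p.1 p.2) (hb : b ∉ 𝒯)
    (ht : #𝒯 ≤ d - 1) {w : V} (hw : w ∈ ℰ) :
    #(A₀.sectL w) + #𝒰 ≤ #(unsaturatedNear G d b A₀ w) + (d - 1) +
      if w ∈ 𝒰 \ 𝒯 ∧ #𝒰 ≤ #(𝒰 ∩ 𝒯) + 1 then 1 else 0 := by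
  have hle : #(A₀.sectL w) ≤ #𝒯 := card_le_card (sectL_subset_image_fst w)
  rcases le_or_gt #(A₀.sectL w) 1 with h1 | h2
  · have := card_unsaturated_le_card_unsaturatedNear_add_two (b := b) hreg hw
    omega
  have hnear : #((𝒰).erase w) ≤ #(unsaturatedNear G d b A₀ w) :=
    card_le_card (unsaturated_erase_subset_unsaturatedNear hreg h2)
  by_cases hwNF : w ∉ 𝒰
  · rw [erase_eq_of_notMem hwNF] at hnear
    omega
  rw [not_not] at hwNF
  rw [card_erase_of_mem hwNF] at hnear
  by_cases hwT : w ∈ 𝒯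
  · have := card_sectL_lt_card_image_fst (fun p hp ↦ (hA p hp).ne) hwT
    omega
  by_cases hsmall : #𝒰 ≤ #(𝒰 ∩ 𝒯) + 1
  · rw [if_pos ⟨mem_sdiff.2 ⟨hwNF, hwT⟩, hsmall⟩]
    omega
  · have hpack := card_sectL_add_card_unsaturated_le_of_mem_unsaturated hreg hA hb hwNF h2
    have : #(A₀.sectL w ∩ 𝒰) ≤ #(𝒰 ∩ 𝒯) := card_le_card fun x hx ↦ by
      rw [mem_inter] at hx ⊢
      exact ⟨hx.2, sectL_subset_image_fst w hx.1⟩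
    omega

lemma card_add_mul_card_unsaturated_le (hd : 4 ≤ d) (hreg : G.IsRegularOfDegree d)
    (hA : ∀ p ∈ A₀, G.Adj p.1 p.2) (hb : b ∉ 𝒯) (ht : #𝒯 ≤ d - 1) :
    #A₀ + #ℰ * #𝒰 ≤ ∑ b' ∈ 𝒰, #(adjEnds G A₀ b') + #ℰ * (d - 1) + 1 := by
  have hsum := sum_le_sum (s := ℰ) fun w hw ↦
    card_sectL_add_card_unsaturated_le_card_unsaturatedNear (b := b) hd hreg hA hb ht hw
  rw [sum_add_distrib, sum_const, ← card_eq_sum_card_sectL fun p hp ↦ mem_image_of_mem _ hp,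
    sum_add_distrib, sum_add_distrib, sum_const, ← card_filter, ← sum_card_adjEnds,
    smul_eq_mul, smul_eq_mul] at hsum
  have hdefect : #{w ∈ ℰ | w ∈ 𝒰 \ 𝒯 ∧ #𝒰 ≤ #(𝒰 ∩ 𝒯) + 1} ≤ 1 := by
    by_cases hsmall : #𝒰 ≤ #(𝒰 ∩ 𝒯) + 1
    · calc _ ≤ #(𝒰 \ 𝒯) := card_le_card fun w hw ↦ (mem_filter.1 hw).2.1
        _ ≤ 1 := by rw [card_sdiff, inter_comm]; omega
    · simp [hsmall]
  omega

lemma mul_card_le_of_one_lt_card_unsaturated (hd : 4 ≤ d) (hreg : G.IsRegularOfDegree d)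
    (hH : G.ClosedTwinFree) (hA : ∀ p ∈ A₀, G.Adj p.1 p.2) (hb : b ∉ 𝒯) (ht : #𝒯 ≤ d - 1)
    (hk1 : 1 < #𝒰) (hkd : #𝒰 ≤ d - 1) : d * #A₀ ≤ (d - 1) * #(cmp G b A₀) := by
  obtain ⟨β₁, hβ₁, β₂, hβ₂, hne⟩ := one_lt_card.1 hk1
  have hm : #A₀ ≤ (d - 1) * #𝒯 := card_le_mul_card_image_fst fun a' _ ↦ by
    by_cases h : a' = β₁
    · exact card_sectR_le_pred hreg hH hA hβ₂ (h ▸ hne)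
    · exact card_sectR_le_pred hreg hH hA hβ₁ h
  have hu := card_image_snd_le hreg hH hA hk1
  have hsum := card_add_mul_card_unsaturated_le hd hreg hA hb ht
  have hs := le_card_cmp (b := b) (A₀ := A₀) hreg
  generalize #𝒰 = k at *
  generalize #𝒯 = t at *
  generalize #ℰ = u at *
  generalize ∑ b' ∈ 𝒰, #(adjEnds G A₀ b') = X at *
  obtain ⟨j, rfl⟩ : ∃ j, d = k + 1 + j := ⟨d - 1 - k, by omega⟩
  simp only [show k + 1 + j - 1 = k + j by omega, show k + 1 + j - k = j + 1 by omega] at *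
  have : #A₀ + t ≤ (k + 1 + j) * (j + 1) + X := by nlinarith [Nat.mul_le_mul_right j hu]
  nlinarith

lemma mul_card_le_of_card_unsaturated_eq (hd : 4 ≤ d) (hreg : G.IsRegularOfDegree d)
    (hH : G.ClosedTwinFree) (ht : #𝒯 ≤ d - 1) (hk : #𝒰 = d) :
    d * #A₀ ≤ (d - 1) * #(cmp G b A₀) := by
  have hw (w : V) (hw : w ∈ ℰ) :
      d * #(A₀.sectL w) ≤ (d - 1) * #(unsaturatedNear G d b A₀ w) := by
    rcases le_or_gt #(A₀.sectL w) 1 with h1 | h2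
    · have := card_unsaturated_le_card_unsaturatedNear_add_two (b := b) hreg hw
      calc d * #(A₀.sectL w) ≤ d * 1 := by gcongr
        _ ≤ 3 * (d - 2) := by omega
        _ ≤ (d - 1) * (d - 2) := by gcongr; omega
        _ ≤ _ := by gcongr; omega
    · have hwNF : w ∉ 𝒰 := fun hwNF ↦ by
        have := card_sectL_le_one hreg hH hk hwNF
        omega
      have hnear := card_le_card (unsaturated_erase_subset_unsaturatedNear (b := b) hreg h2)
      rw [erase_eq_of_notMem hwNF, hk] at hnear
      calc d * #(A₀.sectL w) ≤ d * (d - 1) := by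
            gcongr
            exact (card_le_card (sectL_subset_image_fst w)).trans ht
        _ = (d - 1) * d := mul_comm _ _
        _ ≤ _ := by gcongr
  have hsum := sum_le_sum hw
  rw [← mul_sum, ← mul_sum, ← card_eq_sum_card_sectL fun p hp ↦ mem_image_of_mem _ hp,
    ← sum_card_adjEnds] at hsum
  have hs := le_card_cmp (b := b) (A₀ := A₀) hreg
  rw [hk, Nat.sub_self, mul_zero, zero_add] at hs
  exact hsum.trans (by gcongr)

theorem mul_card_le_mul_card_cmp (hd : 4 ≤ d) (hreg : G.IsRegularOfDegree d)
    (hH : G.ClosedTwinFree) (hA : ∀ p ∈ A₀, G.Adj p.1 p.2) (hb : b ∉ 𝒯) (ht : #𝒯 ≤ d - 1) :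
    d * #A₀ ≤ (d - 1) * #(cmp G b A₀) := by
  have hkd : #𝒰 ≤ d := (card_le_card (filter_subset _ _)).trans_eq (hreg.card_neighborFinset b)
  obtain h | h | h | h : #𝒰 = 0 ∨ #𝒰 = 1 ∨ 1 < #𝒰 ∧ #𝒰 ≤ d - 1 ∨ #𝒰 = d := by omega
  · exact mul_card_le_of_card_unsaturated_eq_zero hreg hA ht h
  · exact mul_card_le_of_card_unsaturated_eq_one hd hreg hH hA ht h
  · exact mul_card_le_of_one_lt_card_unsaturated hd hreg hH hA hb ht h.1 h.2
  · exact mul_card_le_of_card_unsaturated_eq hd hreg hH ht h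

end Compat

open Compat in
theorem stmt17_general {V : Type*} [Fintype V] [DecidableEq V] (G : SimpleGraph V)
    [DecidableRel G.Adj] (d : ℕ) (hd : 4 ≤ d) (hreg : G.IsRegularOfDegree d)
    (hH : ∀ u v : V, u ≠ v →
      insert u (G.neighborFinset u) ≠ insert v (G.neighborFinset v))
    (a b e : V) (he : e ∈ G.neighborFinset a)
    (hbe : b ∈ G.neighborFinset a → e = b)
    (A₀ : Finset (V × V))
    (hA₀ : A₀ ⊆ Finset.univ.filter (fun p : V × V =>
      p.1 ∈ (G.neighborFinset a).erase e ∧ p.2 ∈ G.neighborFinset p.1)) :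
    (d : ℚ) / ((d : ℚ) - 1) * A₀.card ≤
      ((Finset.univ.filter (fun q : V × V =>
          q.1 ∈ G.neighborFinset b ∧ q.2 ∈ G.neighborFinset q.1)).filter
        (fun q => ∃ p ∈ A₀, q.1 ≠ p.1 ∧ q.1 ≠ p.2 ∧
          (p.2 ∈ G.neighborFinset q.1 → q.2 = p.2))).card := by
  have hA : ∀ p ∈ A₀, G.Adj p.1 p.2 := fun p hp ↦ by
    simpa using (mem_filter.1 (hA₀ hp)).2.2
  have hmid : A₀.image Prod.fst ⊆ (G.neighborFinset a).erase e := fun _ ha' ↦ by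
    obtain ⟨p, hp, rfl⟩ := mem_image.1 ha'
    exact (mem_filter.1 (hA₀ hp)).2.1
  have hb : b ∉ A₀.image Prod.fst := fun h ↦ by
    obtain ⟨hne, hba⟩ := mem_erase.1 (hmid h)
    exact hne (hbe hba).symm
  have ht : #(A₀.image Prod.fst) ≤ d - 1 :=
    (card_le_card hmid).trans_eq (by rw [card_erase_of_mem he, hreg.card_neighborFinset])
  have hkey := mul_card_le_mul_card_cmp hd hreg hH hA hb ht
  qify [(by omega : 1 ≤ d)] at hkey
  show (d : ℚ) / (d - 1) * #A₀ ≤ #(cmp G b A₀)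
  have hpos : (0 : ℚ) < d - 1 := by
    have : (4 : ℚ) ≤ d := by exact_mod_cast hd
    linarith
  rw [div_mul_eq_mul_div, div_le_iff₀ hpos]
  linarith

theorem stmt17 {V : Type*} [Fintype V] [DecidableEq V] (G : SimpleGraph V)
    [DecidableRel G.Adj] (d : ℕ) (hd : 4 ≤ d) (hreg : G.IsRegularOfDegree d)
    (hH : ∀ u v : V, u ≠ v →
      insert u (G.neighborFinset u) ≠ insert v (G.neighborFinset v))
    (a b e : V) (hab : a ≠ b) (he : e ∈ G.neighborFinset a)
    (hbe : b ∈ G.neighborFinset a → e = b)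
    (A₀ : Finset (V × V))
    (hA₀ : A₀ ⊆ Finset.univ.filter (fun p : V × V =>
      p.1 ∈ (G.neighborFinset a).erase e ∧ p.2 ∈ G.neighborFinset p.1)) :
    (d : ℚ) / ((d : ℚ) - 1) * A₀.card ≤
      ((Finset.univ.filter (fun q : V × V =>
          q.1 ∈ G.neighborFinset b ∧ q.2 ∈ G.neighborFinset q.1)).filter
        (fun q => ∃ p ∈ A₀, q.1 ≠ p.1 ∧ q.1 ≠ p.2 ∧
          (p.2 ∈ G.neighborFinset q.1 → q.2 = p.2))).card :=
  stmt17_general G d hd hreg hH a b e he hbe A₀ hA₀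
end
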